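/- arXiv:0711.2490 — 3 statements merged into one kernel-verified Lean document; each statement's English description precedes it below -/
import Mathlib

section
/- The symmetric maximum is isotone: for all a, a', b, b' ∈ L, if a ≤ a' and b ≤ b', then a ⊻ b ≤ a' ⊻ b'. -/
/-- The symmetric maximum on a linear order `L` with negation `neg` and
distinguished element `zero`; `max x (neg x)` plays the role of `|x|`. -/
def symMax {L : Type*} [LinearOrder L] (neg : L → L) (zero : L) (a b : L) : L :=
  if b = neg a then zero
  else if max (max a (neg a)) (max b (neg b)) = neg a ∨
          max (max a (neg a)) (max b (neg b)) = neg b then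
    neg (max (max a (neg a)) (max b (neg b)))
  else max (max a (neg a)) (max b (neg b))

/-- The symmetric minimum on a linear order `L` with negation `neg` and
distinguished element `zero`. -/
def symMin {L : Type*} [LinearOrder L] (neg : L → L) (zero : L) (a b : L) : L :=
  if (a < zero ∧ zero < b) ∨ (b < zero ∧ zero < a) then
    neg (min (max a (neg a)) (max b (neg b)))
  else min (max a (neg a)) (max b (neg b))

/-- The splitting-rule evaluation `⟨⊻ s⟩₋⁺` of a finite multiset `s`:
the symmetric maximum of the max of the nonnegative terms (`zero` if none)
and the min of the negative terms (`zero` if none). -/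
def splitEval {L : Type*} [LinearOrder L] (neg : L → L) (zero : L) (s : Multiset L) : L :=
  symMax neg zero ((s.filter (fun x => zero ≤ x)).fold max zero)
    ((s.filter (fun x => x < zero)).fold min zero)

/-!
Away from the antidiagonal `b = -a`, `a ⊻ b` is whichever of `a`, `b` has the larger absolute
value. So for fixed `b ≥ 0` the map `a ↦ a ⊻ b` is `a` below `-b`, `0` at `-b` and `max a b`
above `-b`; it is monotone because `a ⊻ b ∈ {a, b, 0}` is never below `min a b 0`.
The case `b ≤ 0` reduces to this through `(-a) ⊻ (-b) = -(a ⊻ b)`, and commutativity gives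
monotonicity in both arguments.
-/

section

variable {L : Type*} [LinearOrder L] {neg : L → L} {zero a a' b : L}

theorem symMax_comm (hinv : Function.Involutive neg) (a b : L) :
    symMax neg zero a b = symMax neg zero b a := by
  unfold symMax
  by_cases hba : b = neg a
  · have hab : a = neg b := by rw [hba, hinv]
    rw [if_pos hba, if_pos hab]
  · have hab : a ≠ neg b := fun h => hba (by rw [h, hinv])
    rw [if_neg hba, if_neg hab, max_comm (max a (neg a))]
    exact if_congr or_comm rfl rfl

theorem symMax_of_eq_neg (h : b = neg a) : symMax neg zero a b = zero := by
  simp [symMax, h]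

theorem symMax_of_abs_le_left (hinv : Function.Involutive neg) (hne : b ≠ neg a)
    (h : max b (neg b) ≤ max a (neg a)) : symMax neg zero a b = a := by
  unfold symMax
  rw [if_neg hne, max_eq_left h]
  rcases max_choice a (neg a) with habs | habs <;> rw [habs]
  · split_ifs with hcond
    · rcases hcond with hself | hnegb
      · exact hself.symm
      · exact absurd (by rw [hnegb, hinv]) hne
    · rfl
  · rw [if_pos (Or.inl rfl), hinv]

theorem symMax_of_abs_le_right (hinv : Function.Involutive neg) (hne : b ≠ neg a)
    (h : max a (neg a) ≤ max b (neg b)) : symMax neg zero a b = b := by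
  rw [symMax_comm hinv]
  exact symMax_of_abs_le_left hinv (fun hab => hne (by rw [hab, hinv])) h

theorem symMax_eq_zero_or_left_or_right (hinv : Function.Involutive neg) (a b : L) :
    symMax neg zero a b = zero ∨ symMax neg zero a b = a ∨ symMax neg zero a b = b := by
  by_cases hne : b = neg a
  · exact Or.inl (symMax_of_eq_neg hne)
  rcases le_total (max b (neg b)) (max a (neg a)) with h | h
  · exact Or.inr (Or.inl (symMax_of_abs_le_left hinv hne h))
  · exact Or.inr (Or.inr (symMax_of_abs_le_right hinv hne h))

theorem min_le_symMax (hinv : Function.Involutive neg) (a b : L) :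
    min (min a b) zero ≤ symMax neg zero a b := by
  rcases symMax_eq_zero_or_left_or_right (zero := zero) hinv a b with h | h | h <;> rw [h] <;>
    simp

theorem symMax_neg_neg (hinv : Function.Involutive neg) (hzero : neg zero = zero) (a b : L) :
    symMax neg zero (neg a) (neg b) = neg (symMax neg zero a b) := by
  by_cases hne : b = neg a
  · rw [symMax_of_eq_neg hne, symMax_of_eq_neg (congrArg neg hne), hzero]
  have hne' : neg b ≠ neg (neg a) := hinv.injective.ne hne
  have habs (x : L) : max (neg x) (neg (neg x)) = max x (neg x) := by rw [hinv, max_comm]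
  rcases le_total (max b (neg b)) (max a (neg a)) with h | h
  · rw [symMax_of_abs_le_left hinv hne h, symMax_of_abs_le_left hinv hne' (by rwa [habs, habs])]
  · rw [symMax_of_abs_le_right hinv hne h, symMax_of_abs_le_right hinv hne' (by rwa [habs, habs])]

theorem symMax_of_lt_neg (hinv : Function.Involutive neg) (hanti : Antitone neg)
    (hb : neg b ≤ b) (h : a < neg b) : symMax neg zero a b = a := by
  have hne : b ≠ neg a := fun e => h.ne (by rw [e, hinv])
  have hba : b ≤ neg a := hinv b ▸ hanti h.le
  exact symMax_of_abs_le_left hinv hne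
    ((max_eq_left hb).trans_le (hba.trans (le_max_right a (neg a))))

theorem symMax_of_neg_lt (hinv : Function.Involutive neg) (hanti : Antitone neg)
    (hb : neg b ≤ b) (h : neg b < a) : symMax neg zero a b = max a b := by
  have hne : b ≠ neg a := fun e => h.ne' (by rw [e, hinv])
  rcases le_total a b with hab | hba
  · have habs : max a (neg a) ≤ max b (neg b) :=
      max_le (hab.trans (le_max_left b (neg b)))
        ((hinv b ▸ hanti h.le).trans (le_max_left b (neg b)))
    rw [symMax_of_abs_le_right hinv hne habs, max_eq_right hab]
  · have habs : max b (neg b) ≤ max a (neg a) :=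
      (max_eq_left hb).trans_le (hba.trans (le_max_left a (neg a)))
    rw [symMax_of_abs_le_left hinv hne habs, max_eq_left hba]

theorem symMax_mono_left_of_nonneg (hinv : Function.Involutive neg) (hanti : Antitone neg)
    (hzero : neg zero = zero) (hb : zero ≤ b) (ha : a ≤ a') :
    symMax neg zero a b ≤ symMax neg zero a' b := by
  have hnb : neg b ≤ zero := hzero ▸ hanti hb
  have hbb : neg b ≤ b := hnb.trans hb
  rcases lt_trichotomy a (neg b) with hlt | rfl | hgt
  · rw [symMax_of_lt_neg hinv hanti hbb hlt]
    refine le_trans ?_ (min_le_symMax hinv a' b)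
    exact le_min (le_min ha (hlt.le.trans hbb)) (hlt.le.trans hnb)
  · rcases ha.eq_or_lt with rfl | hlt
    · exact le_rfl
    rw [symMax_of_eq_neg (hinv b).symm, symMax_of_neg_lt hinv hanti hbb hlt]
    exact hb.trans (le_max_right a' b)
  · rw [symMax_of_neg_lt hinv hanti hbb hgt, symMax_of_neg_lt hinv hanti hbb (hgt.trans_le ha)]
    exact max_le_max_right b ha

theorem symMax_mono_left (hinv : Function.Involutive neg) (hanti : Antitone neg)
    (hzero : neg zero = zero) (ha : a ≤ a') :
    symMax neg zero a b ≤ symMax neg zero a' b := by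
  rcases le_total zero b with hb | hb
  · exact symMax_mono_left_of_nonneg hinv hanti hzero hb ha
  have hnb : zero ≤ neg b := hzero ▸ hanti hb
  have hneg := symMax_mono_left_of_nonneg hinv hanti hzero hnb (hanti ha)
  rw [symMax_neg_neg hinv hzero, symMax_neg_neg hinv hzero] at hneg
  simpa only [hinv _] using hanti hneg

end

/-- the symmetric maximum is isotone. -/
theorem symMax_isotone {L : Type*} [LinearOrder L]
    (neg : L → L) (zero : L)
    (hinv : ∀ x, neg (neg x) = x)
    (hord : ∀ x y, x ≤ y ↔ neg y ≤ neg x)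
    (hzero : neg zero = zero)
    (a a' b b' : L) (ha : a ≤ a') (hb : b ≤ b') :
    symMax neg zero a b ≤ symMax neg zero a' b' := by
  have hanti : Antitone neg := fun x y h => (hord x y).1 h
  calc symMax neg zero a b ≤ symMax neg zero a' b := symMax_mono_left hinv hanti hzero ha
    _ = symMax neg zero b a' := symMax_comm hinv a' b
    _ ≤ symMax neg zero b' a' := symMax_mono_left hinv hanti hzero hb
    _ = symMax neg zero a' b' := symMax_comm hinv b' a'
end

section
/- Adding terms cannot decrease the absolute value of a splitting-rule evaluation, except by cancellation to 0: for all finite multisets s and t over L, either ⟨⊻ (s + t)⟩₋⁺ = 0 or |⟨⊻ (s + t)⟩₋⁺| ≥ |⟨⊻ s⟩₋⁺|. -/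
namespace Multiset

variable {α : Type*} [LinearOrder α]

theorem fold_max_add (b : α) (s t : Multiset α) :
    (s + t).fold max b = max (s.fold max b) (t.fold max b) := by
  simpa only [max_self] using fold_add max b b s t

theorem fold_min_add (b : α) (s t : Multiset α) :
    (s + t).fold min b = min (s.fold min b) (t.fold min b) := by
  simpa only [min_self] using fold_add min b b s t

theorem self_le_fold_max (b : α) (s : Multiset α) : b ≤ s.fold max b := by
  simpa only [zero_add, fold_zero] using (fold_max_add b 0 s).ge.trans' (le_max_left _ _)

theorem fold_min_le_self (b : α) (s : Multiset α) : s.fold min b ≤ b := by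
  simpa only [zero_add, fold_zero] using (fold_min_add b 0 s).le.trans (min_le_left _ _)

end Multiset

section SymmetricMaximum

variable {L : Type*} [LinearOrder L] {neg : L → L} {zero : L}

theorem neg_abs_le_abs (hinv : ∀ x, neg (neg x) = x) (x : L) :
    neg (max x (neg x)) ≤ max x (neg x) := by
  rcases le_total x (neg x) with h | h
  · simpa only [max_eq_right h, hinv] using h
  · simpa only [max_eq_left h] using h

theorem abs_symMax_eq_zero_or_eq (hinv : ∀ x, neg (neg x) = x)
    (hord : ∀ x y, x ≤ y ↔ neg y ≤ neg x) (a b : L) :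
    symMax neg zero a b = zero ∨
      max (symMax neg zero a b) (neg (symMax neg zero a b)) =
        max (max a (neg a)) (max b (neg b)) := by
  set M := max (max a (neg a)) (max b (neg b))
  -- `neg M ≤ neg |a| ≤ |a| ≤ M`
  have hM : neg M ≤ M :=
    ((hord _ _).mp (le_max_left _ _)).trans
      ((neg_abs_le_abs hinv a).trans (le_max_left _ _))
  unfold symMax
  split_ifs
  · exact Or.inl rfl
  · exact Or.inr (by rw [hinv, max_comm]; exact max_eq_left hM)
  · exact Or.inr (max_eq_left hM)

end SymmetricMaximum

section SplittingRule

variable {L : Type*} [LinearOrder L] {neg : L → L} {zero : L}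

variable (zero) in
def splitPos (s : Multiset L) : L :=
  (s.filter (fun x => zero ≤ x)).fold max zero

variable (zero) in
def splitNeg (s : Multiset L) : L :=
  (s.filter (fun x => x < zero)).fold min zero

theorem splitEval_eq_symMax (s : Multiset L) :
    splitEval neg zero s = symMax neg zero (splitPos zero s) (splitNeg zero s) :=
  rfl

theorem zero_le_splitPos (s : Multiset L) : zero ≤ splitPos zero s :=
  Multiset.self_le_fold_max _ _

theorem splitNeg_le_zero (s : Multiset L) : splitNeg zero s ≤ zero :=
  Multiset.fold_min_le_self _ _

theorem splitPos_le_splitPos_add (s t : Multiset L) : splitPos zero s ≤ splitPos zero (s + t) := by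
  rw [splitPos, splitPos, Multiset.filter_add, Multiset.fold_max_add]
  exact le_max_left _ _

theorem splitNeg_add_le_splitNeg (s t : Multiset L) : splitNeg zero (s + t) ≤ splitNeg zero s := by
  rw [splitNeg, splitNeg, Multiset.filter_add, Multiset.fold_min_add]
  exact min_le_left _ _

variable (hinv : ∀ x, neg (neg x) = x) (hord : ∀ x y, x ≤ y ↔ neg y ≤ neg x)
  (hzero : neg zero = zero)
include hinv hord hzero

theorem abs_splitEval_eq_zero_or_eq (s : Multiset L) :
    splitEval neg zero s = zero ∨
      max (splitEval neg zero s) (neg (splitEval neg zero s)) =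
        max (splitPos zero s) (neg (splitNeg zero s)) := by
  have hpos : zero ≤ splitPos zero s := zero_le_splitPos s
  have hneg : splitNeg zero s ≤ zero := splitNeg_le_zero s
  have hneg_pos : neg (splitPos zero s) ≤ zero := by simpa only [hzero] using (hord _ _).mp hpos
  have hneg_neg : zero ≤ neg (splitNeg zero s) := by simpa only [hzero] using (hord _ _).mp hneg
  have habs_pos : max (splitPos zero s) (neg (splitPos zero s)) = splitPos zero s :=
    max_eq_left (hneg_pos.trans hpos)
  have habs_neg : max (splitNeg zero s) (neg (splitNeg zero s)) = neg (splitNeg zero s) :=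
    max_eq_right (hneg.trans hneg_neg)
  rw [← habs_pos, ← habs_neg, splitEval_eq_symMax]
  exact abs_symMax_eq_zero_or_eq hinv hord _ _

theorem abs_splitEval_le (s : Multiset L) :
    max (splitEval neg zero s) (neg (splitEval neg zero s)) ≤
      max (splitPos zero s) (neg (splitNeg zero s)) := by
  rcases abs_splitEval_eq_zero_or_eq hinv hord hzero s with h | h
  · rw [h, hzero, max_self]
    exact (zero_le_splitPos s).trans (le_max_left _ _)
  · exact h.le

end SplittingRule

/-- adding terms cannot decrease the absolute value of a
splitting-rule evaluation, except by cancellation to `zero`.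
Here `|x| = max x (neg x)`. -/
theorem splitEval_add_not_smaller {L : Type*} [LinearOrder L]
    (neg : L → L) (zero : L)
    (hinv : ∀ x, neg (neg x) = x)
    (hord : ∀ x y, x ≤ y ↔ neg y ≤ neg x)
    (hzero : neg zero = zero)
    (s t : Multiset L) :
    splitEval neg zero (s + t) = zero ∨
      max (splitEval neg zero s) (neg (splitEval neg zero s)) ≤
        max (splitEval neg zero (s + t)) (neg (splitEval neg zero (s + t))) := by
  refine (abs_splitEval_eq_zero_or_eq hinv hord hzero (s + t)).imp_right fun h => ?_
  calc max (splitEval neg zero s) (neg (splitEval neg zero s))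
      _ ≤ max (splitPos zero s) (neg (splitNeg zero s)) := abs_splitEval_le hinv hord hzero s
      _ ≤ max (splitPos zero (s + t)) (neg (splitNeg zero (s + t))) :=
        max_le_max (splitPos_le_splitPos_add s t)
          ((hord _ _).mp (splitNeg_add_le_splitNeg s t))
      _ = _ := h.symm
end

section
/- The canonical Möbius function is an inverse of the Riemann function under the splitting rule: let X be a poset in which every interval [x, y] is finite, and suppose L has a greatest element 1 with 0 < 1 (so −1 is its least element). Define ζ(x, y) := 1 if x ≤ y and 0 otherwise, and μ(x, y) := 1 if x = y, μ(x, y) := −1 if x ⋖ y, and μ(x, y) := 0 otherwise. Then for all x ≤ y in X: ⟨⊻ {μ(x, u) ⊼ ζ(u, y) : x ≤ u ≤ y}⟩₋⁺ equals 1 if x = y and equals 0 if x < y. -/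
/-!
For `x ≤ u ≤ y` we have `ζ(u, y) = 1`, and `a ⊼ 1 = a` for every `a` with `|a| ≤ 1`, so the
terms are just the values `μ(x, u) ∈ {1, -1, 0}`, and `μ(x, x) = 1` is among them. Hence the
nonnegative part of the splitting rule is `1`, and everything hinges on whether `-1` occurs,
i.e. whether `x` has an upper cover in `[x, y]`: for `x = y` it does not, giving `1 ⊻ 0 = 1`;
for `x < y` finiteness of `[x, y]` provides a cover, giving `1 ⊻ -1 = 0`.
-/

theorem Multiset.fold_max_le_iff {L : Type*} [LinearOrder L] {s : Multiset L} {b c : L} :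
    s.fold max b ≤ c ↔ b ≤ c ∧ ∀ a ∈ s, a ≤ c := by
  induction s using Multiset.induction_on with
  | empty => simp
  | cons d t ih => simp [ih, and_left_comm]

theorem Multiset.le_fold_max_of_mem {L : Type*} [LinearOrder L] {s : Multiset L} {a : L}
    (b : L) (ha : a ∈ s) : a ≤ s.fold max b := by
  induction s using Multiset.induction_on with
  | empty => simp at ha
  | cons d t ih =>
    rw [Multiset.fold_cons_left]
    rcases Multiset.mem_cons.mp ha with rfl | hat
    · exact le_max_left _ _
    · exact (ih hat).trans (le_max_right _ _)

theorem Multiset.fold_max_eq_of_mem {L : Type*} [LinearOrder L] {s : Multiset L} {b c : L}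
    (hc : c ∈ s) (hb : b ≤ c) (hs : ∀ a ∈ s, a ≤ c) : s.fold max b = c :=
  le_antisymm (Multiset.fold_max_le_iff.mpr ⟨hb, hs⟩) (Multiset.le_fold_max_of_mem b hc)

theorem Multiset.fold_min_eq_of_mem {L : Type*} [LinearOrder L] {s : Multiset L} {b c : L}
    (hc : c ∈ s) (hb : c ≤ b) (hs : ∀ a ∈ s, c ≤ a) : s.fold min b = c :=
  Multiset.fold_max_eq_of_mem (L := Lᵒᵈ) hc hb hs

section SymmetricOrder

variable {L : Type*} [LinearOrder L] {neg : L → L} {zero one : L}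

theorem lt_iff_neg_lt_neg (hord : ∀ x y, x ≤ y ↔ neg y ≤ neg x) {x y : L} :
    x < y ↔ neg y < neg x := by
  rw [lt_iff_not_ge, lt_iff_not_ge, hord]

theorem neg_lt_zero_of_pos (hord : ∀ x y, x ≤ y ↔ neg y ≤ neg x) (hzero : neg zero = zero)
    {a : L} (ha : zero < a) : neg a < zero :=
  hzero ▸ (lt_iff_neg_lt_neg hord).mp ha

theorem symMin_one_right (hinv : ∀ x, neg (neg x) = x) (hord : ∀ x y, x ≤ y ↔ neg y ≤ neg x)
    (hzero : neg zero = zero) (h01 : zero < one) {a : L} (ha : a ≤ one) (ha' : neg a ≤ one) :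
    symMin neg zero a one = a := by
  have habs_one : max one (neg one) = one :=
    max_eq_left ((neg_lt_zero_of_pos hord hzero h01).trans h01).le
  unfold symMin
  rw [habs_one]
  by_cases ha0 : a < zero
  · have habs_a : max a (neg a) = neg a :=
      max_eq_right (ha0.trans (hzero ▸ (lt_iff_neg_lt_neg hord).mp ha0)).le
    rw [if_pos (Or.inl ⟨ha0, h01⟩), habs_a, min_eq_left ha', hinv]
  · have ha0 : zero ≤ a := not_lt.mp ha0
    have hna : neg a ≤ zero := hzero ▸ (hord zero a).mp ha0
    have habs_a : max a (neg a) = a := max_eq_left (hna.trans ha0)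
    rw [if_neg (by rintro (⟨h, -⟩ | ⟨h, -⟩) <;> order), habs_a, min_eq_left ha]

theorem symMax_zero_right_of_pos (hord : ∀ x y, x ≤ y ↔ neg y ≤ neg x)
    (hzero : neg zero = zero) {a : L} (ha : zero < a) : symMax neg zero a zero = a := by
  have hna : neg a < zero := neg_lt_zero_of_pos hord hzero ha
  have habs : max (max a (neg a)) (max zero (neg zero)) = a := by
    rw [hzero, max_self, max_eq_left (hna.trans ha).le, max_eq_left ha.le]
  unfold symMax
  rw [if_neg hna.ne', habs, if_neg (by rw [hzero]; rintro (h | h) <;> order)]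

theorem symMax_neg_right_self (a : L) : symMax neg zero a (neg a) = zero :=
  if_pos rfl

variable {s : Multiset L}

theorem fold_max_filter_nonneg_eq_one (hord : ∀ x y, x ≤ y ↔ neg y ≤ neg x)
    (hzero : neg zero = zero) (h01 : zero < one)
    (hs : ∀ a ∈ s, a = one ∨ a = neg one ∨ a = zero) (h1 : one ∈ s) :
    (s.filter (fun x => zero ≤ x)).fold max zero = one := by
  have hn1 : neg one < zero := neg_lt_zero_of_pos hord hzero h01
  refine Multiset.fold_max_eq_of_mem (Multiset.mem_filter.mpr ⟨h1, h01.le⟩) h01.le ?_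
  intro a ha
  rw [Multiset.mem_filter] at ha
  rcases hs a ha.1 with rfl | rfl | rfl <;> order

theorem splitEval_eq_one_of_neg_one_notMem (hord : ∀ x y, x ≤ y ↔ neg y ≤ neg x)
    (hzero : neg zero = zero) (h01 : zero < one)
    (hs : ∀ a ∈ s, a = one ∨ a = neg one ∨ a = zero) (h1 : one ∈ s) (hn1 : neg one ∉ s) :
    splitEval neg zero s = one := by
  have hneg : s.filter (fun x => x < zero) = 0 := by
    refine Multiset.filter_eq_nil.mpr fun a ha ha0 => ?_
    rcases hs a ha with rfl | rfl | rfl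
    · order
    · exact hn1 ha
    · exact lt_irrefl _ ha0
  rw [splitEval, fold_max_filter_nonneg_eq_one hord hzero h01 hs h1, hneg, Multiset.fold_zero,
    symMax_zero_right_of_pos hord hzero h01]

theorem splitEval_eq_zero_of_neg_one_mem (hord : ∀ x y, x ≤ y ↔ neg y ≤ neg x)
    (hzero : neg zero = zero) (h01 : zero < one)
    (hs : ∀ a ∈ s, a = one ∨ a = neg one ∨ a = zero) (h1 : one ∈ s) (hn1 : neg one ∈ s) :
    splitEval neg zero s = zero := by
  have hn1_neg : neg one < zero := neg_lt_zero_of_pos hord hzero h01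
  have hneg : (s.filter (fun x => x < zero)).fold min zero = neg one := by
    refine Multiset.fold_min_eq_of_mem (Multiset.mem_filter.mpr ⟨hn1, hn1_neg⟩) hn1_neg.le ?_
    intro a ha
    rw [Multiset.mem_filter] at ha
    rcases hs a ha.1 with rfl | rfl | rfl <;> order
  rw [splitEval, fold_max_filter_nonneg_eq_one hord hzero h01 hs h1, hneg,
    symMax_neg_right_self]

end SymmetricOrder

theorem canonical_mobius_inverse_of_riemann_general {L : Type*} [LinearOrder L]
    (neg : L → L) (zero one : L)
    (hinv : ∀ x, neg (neg x) = x)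
    (hord : ∀ x y, x ≤ y ↔ neg y ≤ neg x)
    (hzero : neg zero = zero)
    (h01 : zero < one)
    {X : Type*} [PartialOrder X]
    (hfin : ∀ x y : X, {u | x ≤ u ∧ u ≤ y}.Finite)
    (ζ μ : X → X → L)
    (hζ1 : ∀ x y : X, x ≤ y → ζ x y = one)
    (hμ1 : ∀ x : X, μ x x = one)
    (hμ2 : ∀ x y : X, x ⋖ y → μ x y = neg one)
    (hμ3 : ∀ x y : X, x ≠ y → ¬ x ⋖ y → μ x y = zero) :
    ∀ x y : X, x ≤ y →
      (x = y →
        splitEval neg zero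
          ((hfin x y).toFinset.val.map (fun u => symMin neg zero (μ x u) (ζ u y))) = one) ∧
      (x < y →
        splitEval neg zero
          ((hfin x y).toFinset.val.map (fun u => symMin neg zero (μ x u) (ζ u y))) = zero) := by
  intro x y hxy
  set S := (hfin x y).toFinset.val
  have hS : ∀ {u}, u ∈ S ↔ x ≤ u ∧ u ≤ y := by simp [S]
  have hμ : ∀ u, μ x u = one ∨ μ x u = neg one ∨ μ x u = zero := by
    intro u
    by_cases hxu : x = u
    · exact .inl (hxu ▸ hμ1 x)
    by_cases hcov : x ⋖ u
    · exact .inr (.inl (hμ2 x u hcov))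
    · exact .inr (.inr (hμ3 x u hxu hcov))
  have hn1 : neg one < zero := neg_lt_zero_of_pos hord hzero h01
  have hterms : S.map (fun u => symMin neg zero (μ x u) (ζ u y)) = S.map (μ x) := by
    refine Multiset.map_congr rfl fun u hu => ?_
    rw [hζ1 u y (hS.mp hu).2]
    refine symMin_one_right hinv hord hzero h01 ?_ ?_ <;>
      rcases hμ u with h | h | h <;> simp [h, hinv, hzero, h01.le, (hn1.trans h01).le]
  have hvals : ∀ a ∈ S.map (μ x), a = one ∨ a = neg one ∨ a = zero := by
    simpa only [Multiset.forall_mem_map_iff] using fun u _ => hμ u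
  have hone_mem : one ∈ S.map (μ x) := Multiset.mem_map.mpr ⟨x, hS.mpr ⟨le_rfl, hxy⟩, hμ1 x⟩
  rw [hterms]
  refine ⟨?_, fun hlt => ?_⟩
  · rintro rfl
    refine splitEval_eq_one_of_neg_one_notMem hord hzero h01 hvals hone_mem fun hmem => ?_
    obtain ⟨u, hu, hu_neg⟩ := Multiset.mem_map.mp hmem
    obtain rfl : u = x := le_antisymm (hS.mp hu).2 (hS.mp hu).1
    rw [hμ1] at hu_neg
    order
  · let := LocallyFiniteOrder.ofFiniteIcc hfin
    obtain ⟨m, hxm, hmy⟩ := exists_covBy_le_of_lt hlt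
    exact splitEval_eq_zero_of_neg_one_mem hord hzero h01 hvals hone_mem
      (Multiset.mem_map.mpr ⟨m, hS.mpr ⟨hxm.le, hmy⟩, hμ2 x m hxm⟩)

/-- the canonical Möbius function is an inverse of the Riemann
function under the splitting rule: `⟨⊻_{x ≤ u ≤ y} μ(x,u) ⊼ ζ(u,y)⟩₋⁺` equals
`one` if `x = y` and `zero` if `x < y`. -/
theorem canonical_mobius_inverse_of_riemann {L : Type*} [LinearOrder L]
    (neg : L → L) (zero one : L)
    (hinv : ∀ x, neg (neg x) = x)
    (hord : ∀ x y, x ≤ y ↔ neg y ≤ neg x)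
    (hzero : neg zero = zero)
    (hone : ∀ x : L, x ≤ one) (h01 : zero < one)
    {X : Type*} [PartialOrder X]
    (hfin : ∀ x y : X, {u | x ≤ u ∧ u ≤ y}.Finite)
    (ζ μ : X → X → L)
    (hζ1 : ∀ x y : X, x ≤ y → ζ x y = one)
    (hζ2 : ∀ x y : X, ¬ x ≤ y → ζ x y = zero)
    (hμ1 : ∀ x : X, μ x x = one)
    (hμ2 : ∀ x y : X, x ⋖ y → μ x y = neg one)
    (hμ3 : ∀ x y : X, x ≠ y → ¬ x ⋖ y → μ x y = zero) :
    ∀ x y : X, x ≤ y →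
      (x = y →
        splitEval neg zero
          ((hfin x y).toFinset.val.map (fun u => symMin neg zero (μ x u) (ζ u y))) = one) ∧
      (x < y →
        splitEval neg zero
          ((hfin x y).toFinset.val.map (fun u => symMin neg zero (μ x u) (ζ u y))) = zero) :=
  canonical_mobius_inverse_of_riemann_general neg zero one hinv hord hzero h01 hfin ζ μ hζ1 hμ1 hμ2
    hμ3
end
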